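/- The identity sum_{k=0}^{l} binom(l,k)^2 / binom(2l, 2k) = 4^l / binom(2l, l) holds for every nonnegative integer l. -/

import Mathlib

/-!
Write `c k = (2k choose k)`. Expanding into factorials, the `k`-th summand is
`c k * c (l - k) / (2l choose l)`, so the identity is the classical convolution
`S n := ∑_{i+j=n} c i * c j = 4 ^ n`. For that, the symmetry `i ↔ j` gives
`2 ∑_{i+j=n} i * c i * c j = n * S n`, and combined with
`(i + 1) * c (i + 1) = 2 * (2i + 1) * c i` it turns `(n + 1) * S (n + 1)` into
`4 * (n + 1) * S n`.
-/

open Finset Nat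

theorem Finset.Nat.two_mul_sum_antidiagonal_fst_mul {R : Type*} [CommSemiring R] (a : ℕ → R)
    (n : ℕ) :
    2 * ∑ p ∈ antidiagonal n, (p.1 : R) * (a p.1 * a p.2) =
      n * ∑ p ∈ antidiagonal n, a p.1 * a p.2 := by
  have hswap : ∑ p ∈ antidiagonal n, (p.2 : R) * (a p.1 * a p.2) =
      ∑ p ∈ antidiagonal n, (p.1 : R) * (a p.1 * a p.2) := by
    rw [← Finset.Nat.sum_antidiagonal_swap]
    exact sum_congr rfl fun p _ => by simp only [Prod.fst_swap, Prod.snd_swap]; ring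
  rw [two_mul]
  nth_rewrite 2 [← hswap]
  rw [← sum_add_distrib, mul_sum]
  refine sum_congr rfl fun p hp => ?_
  rw [← add_mul, ← Nat.cast_add, mem_antidiagonal.mp hp]

theorem Nat.sum_antidiagonal_centralBinom_mul (n : ℕ) :
    ∑ p ∈ antidiagonal n, centralBinom p.1 * centralBinom p.2 = 4 ^ n := by
  have symm (m : ℕ) := Finset.Nat.two_mul_sum_antidiagonal_fst_mul centralBinom m
  simp only [Nat.cast_id] at symm
  induction n with
  | zero => simp
  | succ n ih =>
    refine Nat.eq_of_mul_eq_mul_left n.succ_pos ?_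
    calc (n + 1) * ∑ p ∈ antidiagonal (n + 1), centralBinom p.1 * centralBinom p.2
        = 2 * ∑ p ∈ antidiagonal (n + 1), p.1 * (centralBinom p.1 * centralBinom p.2) :=
          (symm _).symm
      _ = 2 * ∑ p ∈ antidiagonal n, (p.1 + 1) * centralBinom (p.1 + 1) * centralBinom p.2 := by
          simp [Finset.Nat.sum_antidiagonal_succ, mul_assoc]
      _ = 2 * ∑ p ∈ antidiagonal n,
            (2 * (2 * (p.1 * (centralBinom p.1 * centralBinom p.2))) +
              2 * (centralBinom p.1 * centralBinom p.2)) := by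
          simp only [Nat.succ_mul_centralBinom_succ]
          exact congrArg _ (sum_congr rfl fun p _ => by ring)
      _ = (n + 1) * 4 ^ (n + 1) := by
          rw [sum_add_distrib, ← mul_sum, ← mul_sum, ← mul_sum, symm, ih]
          ring

theorem Nat.choose_sq_mul_centralBinom {i j n : ℕ} (h : i + j = n) :
    n.choose i ^ 2 * centralBinom n = centralBinom i * centralBinom j * (2 * n).choose (2 * i) := by
  subst h
  refine Nat.eq_of_mul_eq_mul_right (by positivity : 0 < (i ! * j !) ^ 2) ?_
  have hn := Nat.add_choose_mul_factorial_mul_factorial i j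
  have h2n := Nat.add_choose_mul_factorial_mul_factorial (i + j) (i + j)
  have h2i := Nat.add_choose_mul_factorial_mul_factorial i i
  have h2j := Nat.add_choose_mul_factorial_mul_factorial j j
  have hsplit := Nat.add_choose_mul_factorial_mul_factorial (i + i) (j + j)
  rw [← Nat.choose_symm_add] at hn hsplit
  rw [show i + i + (j + j) = i + j + (i + j) by ring] at hsplit
  simp only [Nat.centralBinom_eq_two_mul_choose, two_mul]
  calc (i + j).choose i ^ 2 * (i + j + (i + j)).choose (i + j) * (i ! * j !) ^ 2
      = (i + j + (i + j)).choose (i + j) * ((i + j).choose i * i ! * j !) ^ 2 := by ring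
    _ = (i + j + (i + j)).choose (i + i) * ((i + i).choose i * i ! * i !) *
          ((j + j).choose j * j ! * j !) := by
        rw [hn, h2i, h2j, hsplit, sq, ← mul_assoc, h2n]
    _ = _ := by ring

/-- `∑_{k=0}^{l} binom(l,k)^2 / binom(2l,2k) = 4^l / binom(2l,l)`. -/
theorem sum_sq_choose_div_choose (l : ℕ) :
    ∑ k ∈ Finset.range (l + 1), ((l.choose k : ℝ) ^ 2 / ((2 * l).choose (2 * k) : ℝ))
      = (4 : ℝ) ^ l / ((2 * l).choose l : ℝ) := by
  have hterm : ∀ k ∈ range (l + 1), (l.choose k : ℝ) ^ 2 / ((2 * l).choose (2 * k) : ℝ) =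
      ((centralBinom k * centralBinom (l - k) : ℕ) : ℝ) / ((2 * l).choose l : ℝ) := by
    intro k hk
    have hkl : k ≤ l := Nat.lt_succ_iff.mp (mem_range.mp hk)
    have hchoose : (2 * l).choose (2 * k) ≠ 0 := (Nat.choose_pos (by omega)).ne'
    rw [div_eq_div_iff (by exact_mod_cast hchoose) (by exact_mod_cast centralBinom_ne_zero l)]
    exact_mod_cast Nat.choose_sq_mul_centralBinom (Nat.add_sub_cancel' hkl)
  rw [sum_congr rfl hterm, ← sum_div, ← Nat.cast_sum,
    ← Finset.Nat.sum_antidiagonal_eq_sum_range_succ (fun i j => centralBinom i * centralBinom j),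
    Nat.sum_antidiagonal_centralBinom_mul, Nat.cast_pow, Nat.cast_ofNat]
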